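/- Let G be a bipartite graph with partite sets X and Y such that for every subset S of X, |N_G(S)| ≥ (3/2)|S|. Then G has a subgraph H covering X (i.e., X ⊆ V(H)) such that every vertex x ∈ X has degree exactly 2 in H and every vertex y ∈ Y has degree at most 2 in H. -/

import Mathlib

/-!
Give every `x ∈ X` three copies and every `y ∈ Y` two copies. The hypothesis
`3 |S| ≤ 2 |N(S)|` is then exactly Hall's condition for the blown-up graph, so it has a matching
saturating the copies of `X`. Since `y` has only two copies, the three copies of `x` are matched to
at least two distinct neighbours of `x`, and each `y` is matched to copies of at most two vertices
of `X`. Joining each `x` to two of its matched neighbours gives `H`.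
-/

open SimpleGraph Finset

namespace Finset

variable {ι β : Type*} [DecidableEq β]

theorem exists_injective_of_mul_card_le_mul_card_biUnion (t : ι → Finset β) (a b : ℕ)
    (hall : ∀ s : Finset ι, a * #s ≤ b * #(s.biUnion t)) :
    ∃ f : ι × Fin a → β × Fin b, Function.Injective f ∧ ∀ p, (f p).1 ∈ t p.1 := by
  classical
  let t' : ι × Fin a → Finset (β × Fin b) := fun p => t p.1 ×ˢ univ
  have hall' : ∀ s : Finset (ι × Fin a), #s ≤ #(s.biUnion t') := by
    intro s
    have hbiUnion : s.biUnion t' = (s.image Prod.fst).biUnion t ×ˢ univ := by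
      ext ⟨y, j⟩
      simp [t']
    calc #s ≤ #(s.image Prod.fst ×ˢ s.image Prod.snd) := card_le_card subset_product
      _ ≤ #(s.image Prod.fst) * a := by
        rw [card_product]
        exact Nat.mul_le_mul_left _ (card_le_univ _ |>.trans_eq (Fintype.card_fin a))
      _ ≤ #((s.image Prod.fst).biUnion t) * b := by linarith [hall (s.image Prod.fst)]
      _ = #(s.biUnion t') := by rw [hbiUnion, card_product, card_univ, Fintype.card_fin]
  obtain ⟨f, hf, hft⟩ := (all_card_le_biUnion_card_iff_exists_injective t').mp hall'
  exact ⟨f, hf, fun p => (mem_product.mp (hft p)).1⟩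

theorem exists_subsets_of_mul_card_le_mul_card_biUnion [Fintype ι]
    (t : ι → Finset β) (a b : ℕ) (hall : ∀ s : Finset ι, a * #s ≤ b * #(s.biUnion t)) :
    ∃ φ : ι → Finset β, (∀ i, φ i ⊆ t i) ∧ (∀ i, a ≤ b * #(φ i)) ∧
      ∀ y, #{i | y ∈ φ i} ≤ b := by
  classical
  obtain ⟨f, hf, hft⟩ := exists_injective_of_mul_card_le_mul_card_biUnion t a b hall
  refine ⟨fun i => univ.image fun k => (f (i, k)).1, fun i => ?_, fun i => ?_, fun y => ?_⟩
  · simpa [image_subset_iff] using fun k => hft (i, k)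
  · calc a = #(univ : Finset (Fin a)) := by simp
      _ ≤ #((univ.image fun k => (f (i, k)).1) ×ˢ (univ : Finset (Fin b))) :=
        card_le_card_of_injOn (fun k => f (i, k)) (fun k _ => by simp)
          fun k _ l _ hkl => by simpa using hf hkl
      _ = b * #(univ.image fun k => (f (i, k)).1) := by simp [mul_comm]
  · -- `f` is injective, so the slots sent into `{y} × Fin b` are told apart by their copy of `y`
    let P : Finset (ι × Fin a) := {p | (f p).1 = y}
    have hP : #P ≤ b := by
      calc #P ≤ #(univ : Finset (Fin b)) :=
            card_le_card_of_injOn (fun p => (f p).2) (fun _ _ => mem_univ _)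
              fun p hp q hq hpq => hf (Prod.ext (by simp_all [P]) hpq)
        _ = b := by simp
    calc #{i | y ∈ univ.image fun k => (f (i, k)).1}
        = #(P.image Prod.fst) := by congr 1; ext i; simp [P]
      _ ≤ b := card_image_le.trans hP

end Finset

namespace SimpleGraph

variable {V : Type*}

theorem mul_card_le_mul_card_biUnion_neighborFinset [DecidableEq V]
    {G : SimpleGraph V} [G.LocallyFinite] {X : Set V} {a b : ℕ}
    (hall : ∀ S ⊆ X, a * S.ncard ≤ b * {y | ∃ x ∈ S, G.Adj x y}.ncard) (s : Finset X) :
    a * #s ≤ b * #(s.biUnion fun x => G.neighborFinset x) := by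
  have hN : {y | ∃ x ∈ (s.image Subtype.val : Set V), G.Adj x y} =
      ↑(s.biUnion fun x => G.neighborFinset x) := by
    ext y
    simp
  have := hall (s.image Subtype.val) (by simp)
  rwa [hN, Set.ncard_coe_finset, Set.ncard_coe_finset,
    card_image_of_injective _ Subtype.val_injective] at this

variable (G : SimpleGraph V) {X : Set V}

def Subgraph.ofNeighborChoice (φ : X → Set V) (hφ : ∀ x, φ x ⊆ G.neighborSet x) :
    G.Subgraph :=
  toSubgraph (fromRel fun a b => ∃ ha : a ∈ X, b ∈ φ ⟨a, ha⟩) fun a b hab => by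
    obtain ⟨-, ⟨ha, hb⟩ | ⟨hb, ha⟩⟩ := hab
    exacts [hφ _ hb, (hφ _ ha).symm]

variable {G} {φ : X → Set V} {hφ : ∀ x, φ x ⊆ G.neighborSet x}

theorem Subgraph.neighborSet_ofNeighborChoice_of_mem (hX : G.IsIndepSet X) (x : X) :
    (Subgraph.ofNeighborChoice G φ hφ).neighborSet x = φ x := by
  ext y
  simp only [Subgraph.mem_neighborSet, ofNeighborChoice, toSubgraph_adj, fromRel_adj]
  constructor
  · rintro ⟨-, ⟨_, hy⟩ | ⟨hyX, hxy⟩⟩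
    · exact hy
    · exact absurd (hφ _ hxy) (hX hyX x.2 (G.ne_of_adj (hφ _ hxy)))
  · exact fun hy => ⟨G.ne_of_adj (hφ x hy), Or.inl ⟨x.2, hy⟩⟩

theorem Subgraph.neighborSet_ofNeighborChoice_of_notMem {y : V} (hy : y ∉ X) :
    (Subgraph.ofNeighborChoice G φ hφ).neighborSet y = Subtype.val '' {x | y ∈ φ x} := by
  ext x
  simp only [Subgraph.mem_neighborSet, ofNeighborChoice, toSubgraph_adj, fromRel_adj]
  constructor
  · rintro ⟨-, ⟨hyX, -⟩ | ⟨hxX, hyx⟩⟩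
    · exact absurd hyX hy
    · exact ⟨⟨x, hxX⟩, hyx, rfl⟩
  · rintro ⟨x, hyx, rfl⟩
    exact ⟨(G.ne_of_adj (hφ x hyx)).symm, Or.inr ⟨x.2, hyx⟩⟩

end SimpleGraph

theorem stmt_0 {V : Type*} [Fintype V] (G : SimpleGraph V) (X Y : Set V)
    (hdisj : Disjoint X Y)
    (hbip : ∀ a b, G.Adj a b → (a ∈ X ∧ b ∈ Y) ∨ (a ∈ Y ∧ b ∈ X))
    (hHall : ∀ S : Set V, S ⊆ X →
      3 * S.ncard ≤ 2 * {y | ∃ x ∈ S, G.Adj x y}.ncard) :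
    ∃ H : G.Subgraph, X ⊆ H.verts ∧
      (∀ x ∈ X, (H.neighborSet x).ncard = 2) ∧
      (∀ y ∈ Y, (H.neighborSet y).ncard ≤ 2) := by
  classical
  have hXY : G.IsBipartiteWith X Y := ⟨hdisj, hbip⟩
  have hX : G.IsIndepSet X := fun a ha b hb _ hab =>
    hdisj.notMem_of_mem_left hb (hXY.mem_of_mem_adj ha hab)
  obtain ⟨φ, hφG, hφcard, hφdeg⟩ := exists_subsets_of_mul_card_le_mul_card_biUnion
    (fun x : X => G.neighborFinset x) 3 2 (mul_card_le_mul_card_biUnion_neighborFinset hHall)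
  choose ψ hψφ hψcard using fun x => exists_subset_card_eq (show 2 ≤ #(φ x) by linarith [hφcard x])
  have hψG (x : X) : (ψ x : Set V) ⊆ G.neighborSet x := fun y hy => by
    simpa using hφG x (hψφ x hy)
  refine ⟨Subgraph.ofNeighborChoice G (fun x => ψ x) hψG, fun x _ => Set.mem_univ x,
    fun x hx => ?_, fun y hy => ?_⟩
  · rw [Subgraph.neighborSet_ofNeighborChoice_of_mem hX ⟨x, hx⟩, Set.ncard_coe_finset, hψcard]
  · rw [Subgraph.neighborSet_ofNeighborChoice_of_notMem (hdisj.notMem_of_mem_right hy),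
      Set.ncard_image_of_injective _ Subtype.val_injective]
    calc {x | y ∈ (ψ x : Set V)}.ncard ≤ #{x | y ∈ φ x} := by
          rw [← Set.ncard_coe_finset]
          exact Set.ncard_le_ncard fun x (hx : y ∈ ψ x) => by simpa using hψφ x hx
      _ ≤ 2 := hφdeg y
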